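/- arXiv:2410.20952 — 2 statements merged into one kernel-verified Lean document; each statement's English description precedes it below -/
import Mathlib

section
/- Define the real sequence (m_k)_{k ≥ 1} by m_1 = 1 and, for k ≥ 2, m_k = ((1/2)/((3/2)^k − 3/2)) · Σ_{j=1}^{k−1} C(k,j)·m_j·m_{k−j}. Then for every k ≥ 1, the normalized k-th moment of the number of cycles of a uniform nonsimple binary butterfly permutation converges: lim_{n→∞} (2/3)^{nk} · (1/2^{2^n − 1}) · Σ_{σ ∈ B_{2^n}} C(σ)^k = m_k. -/
/-- Kronecker product of permutations: `(i, r) ↦ (σ i, π r)` under the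
row-major identification `Fin (a * b) ≃ Fin a × Fin b`. -/
def permKron {a b : ℕ} (σ : Equiv.Perm (Fin a)) (π : Equiv.Perm (Fin b)) :
    Equiv.Perm (Fin (a * b)) :=
  finProdFinEquiv.symm.trans ((Equiv.prodCongr σ π).trans finProdFinEquiv)

/-- Direct (block) sum of permutations: `(i, r) ↦ (i, π i r)`. -/
def permBlockSum {a b : ℕ} (π : Fin a → Equiv.Perm (Fin b)) :
    Equiv.Perm (Fin (a * b)) :=
  finProdFinEquiv.symm.trans ((Equiv.prodCongrRight π).trans finProdFinEquiv)

/-- The simple `m`-nary butterfly permutations of `Fin (m ^ n)`: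
Kronecker products `τ^{a₁} ⊗ ⋯ ⊗ τ^{aₙ}` of powers of the standard `m`-cycle `τ = finRotate m`. -/
def simpleButterfly (m : ℕ) : (n : ℕ) → Set (Equiv.Perm (Fin (m ^ n)))
  | 0 => {1}
  | n + 1 =>
    {σ | ∃ (a : ℤ) (π : Equiv.Perm (Fin (m ^ n))), π ∈ simpleButterfly m n ∧
      σ = (finCongr (pow_succ' m n).symm).permCongr (permKron (finRotate m ^ a) π)}

/-- The nonsimple `m`-nary butterfly permutations of `Fin (m ^ n)`:
`B₀ = {1}`, `B_{n+1} = {(τ^a ⊗ id) ∘ (σ₁ ⊕ ⋯ ⊕ σ_m) : σᵢ ∈ B_n}`. -/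
def nonsimpleButterfly (m : ℕ) : (n : ℕ) → Set (Equiv.Perm (Fin (m ^ n)))
  | 0 => {1}
  | n + 1 =>
    {σ | ∃ (a : ℤ) (π : Fin m → Equiv.Perm (Fin (m ^ n))),
      (∀ i, π i ∈ nonsimpleButterfly m n) ∧
      σ = (finCongr (pow_succ' m n).symm).permCongr
        (permKron (finRotate m ^ a) 1 * permBlockSum π)}

/-- The length of the longest increasing subsequence of a permutation. -/
noncomputable def LIS {M : ℕ} (σ : Equiv.Perm (Fin M)) : ℕ :=
  sSup {k | ∃ t : Finset (Fin M), t.card = k ∧ StrictMonoOn (⇑σ) ↑t}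

/-- The length of the longest decreasing subsequence of a permutation. -/
noncomputable def LDS {M : ℕ} (σ : Equiv.Perm (Fin M)) : ℕ :=
  sSup {k | ∃ t : Finset (Fin M), t.card = k ∧ StrictAntiOn (⇑σ) ↑t}

/-- The number of cycles in the disjoint cycle decomposition of `σ`,
counting fixed points as cycles of length 1. -/
def numCycles {M : ℕ} (σ : Equiv.Perm (Fin M)) : ℕ :=
  Multiset.card σ.cycleType + (Finset.univ.filter fun x => σ x = x).card

/-- The number of fixed points of `σ`. -/
def numFixed {M : ℕ} (σ : Equiv.Perm (Fin M)) : ℕ :=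
  (Finset.univ.filter fun x => σ x = x).card

/-- The limiting moment sequence: `m₁ = 1` and for `k ≥ 2`,
`m_k = ((1/2)/((3/2)^k − 3/2)) · Σ_{j=1}^{k−1} C(k,j)·m_j·m_{k−j}`. -/
noncomputable def cycleMoment : ℕ → ℝ
  | 0 => 1
  | 1 => 1
  | k + 2 =>
    ((1 / 2) / ((3 / 2 : ℝ) ^ (k + 2) - 3 / 2)) *
      ∑ j ∈ (Finset.Ico 1 (k + 2)).attach,
        (((k + 2).choose j.1 : ℕ) : ℝ) * cycleMoment j.1 * cycleMoment (k + 2 - j.1)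
  decreasing_by
  · have := j.2; rw [Finset.mem_Ico] at this; omega
  · have := j.2; rw [Finset.mem_Ico] at this; omega

/-!
Write a level-`n + 1` butterfly as `(τ^a ⊗ id) ∘ (σ₀ ⊕ σ₁)` with `a ∈ {0, 1}` and `σ₀, σ₁` of
level `n`. For `a = 0` its cycles are those of `σ₀` and of `σ₁`. For `a = 1` it swaps the two
blocks and its square acts as `σ₁σ₀ ⊕ σ₀σ₁`, so its cycles correspond to those of `σ₁σ₀`. The
butterflies of a given level form a group, so `σ₁σ₀` is again uniformly distributed, and the power
sums `S_k(n) = ∑_σ C(σ)^k` satisfy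
`S_k(n + 1) = ∑_j C(k, j) S_j(n) S_{k-j}(n) + S_0(n) S_k(n)`.
Hence `A_k(n) = (2/3)^{nk} S_k(n) / S_0(n)` obeys the affine recursion
`A_k(n + 1) = (2/3)^{k-1} A_k(n) + (terms in A_j, 0 < j < k)`, which contracts for `k ≥ 2`; by
induction on `k` the lower terms converge, and `A_k(n)` tends to the fixed point `m_k`.
-/

open Equiv Finset Filter Topology

namespace Equiv.Perm

variable {α β γ : Type*}

noncomputable def cycleCount (σ : Perm α) : ℕ := Nat.card (Quotient (SameCycle.setoid σ))

theorem cycleCount_eq_natCard_of_surjective (σ : Perm α) {f : α → γ}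
    (hf : Function.Surjective f) (hfib : ∀ x y, f x = f y ↔ σ.SameCycle x y) :
    cycleCount σ = Nat.card γ := by
  have hker : SameCycle.setoid σ = Setoid.ker f := Setoid.ext fun x y => (hfib x y).symm
  rw [cycleCount, hker]
  exact Nat.card_congr (Setoid.quotientKerEquivOfSurjective f hf)

theorem cycleCount_eq_card_cycleType_add [Fintype α] [DecidableEq α] (σ : Perm α) :
    cycleCount σ = Multiset.card σ.cycleType + Fintype.card {x // σ x = x} := by
  let f : α → σ.cycleFactorsFinset ⊕ {x // σ x = x} := fun x =>
    if hx : σ x = x then .inr ⟨x, hx⟩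
    else .inl ⟨σ.cycleOf x, cycleOf_mem_cycleFactorsFinset_iff.2 (mem_support.2 hx)⟩
  have hfib (x y : α) : f x = f y ↔ σ.SameCycle x y := by
    by_cases hx : σ x = x <;> by_cases hy : σ y = y
    · simpa [f, hx, hy] using ⟨fun h => h ▸ SameCycle.refl _ _, fun h => h.eq_of_left hx⟩
    · simpa [f, hx, hy] using fun h => hy (h.apply_eq_self_iff.1 hx)
    · simpa [f, hx, hy] using fun h => hx (h.apply_eq_self_iff.2 hy)
    · simp only [f, hx, hy, dite_false, Sum.inl.injEq, Subtype.mk.injEq]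
      exact (sameCycle_iff_cycleOf_eq_of_mem_support (mem_support.2 hx) (mem_support.2 hy)).symm
  have hf : Function.Surjective f := by
    rintro (⟨c, hc⟩ | ⟨x, hx⟩)
    · obtain ⟨x, hxc⟩ := (mem_cycleFactorsFinset_iff.1 hc).1.nonempty_support
      have hx : σ x ≠ x := mem_support.1 (mem_cycleFactorsFinset_support_le hc hxc)
      exact ⟨x, by simp [f, hx, cycle_is_cycleOf hxc hc]⟩
    · exact ⟨x, by simp [f, hx]⟩
  rw [cycleCount_eq_natCard_of_surjective σ hf hfib, Nat.card_sum, Nat.card_eq_fintype_card,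
    Nat.card_eq_fintype_card, cycleType_def, Multiset.card_map, Fintype.card_coe]
  rfl

theorem sameCycle_permCongr (e : α ≃ β) (σ : Perm α) {x y : β} :
    (e.permCongr σ).SameCycle x y ↔ σ.SameCycle (e.symm x) (e.symm y) := by
  have hpow (i : ℤ) : e.permCongr σ ^ i = e.permCongr (σ ^ i) :=
    (map_zpow (permCongrHom e) σ i).symm
  simp only [SameCycle, hpow, permCongr_apply, ← e.eq_symm_apply]

theorem cycleCount_permCongr (e : α ≃ β) (σ : Perm α) :
    cycleCount (e.permCongr σ) = cycleCount σ :=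
  cycleCount_eq_natCard_of_surjective _ (f := fun y => Quotient.mk (SameCycle.setoid σ) (e.symm y))
    (fun q => q.inductionOn fun x => ⟨e x, by simp⟩)
    (fun _ _ => Quotient.eq.trans (sameCycle_permCongr e σ).symm)

def prodCongrRightHom : (α → Perm β) →* Perm (α × β) where
  toFun := prodCongrRight
  map_one' := by ext ⟨a, x⟩ <;> rfl
  map_mul' _ _ := by ext ⟨a, x⟩ <;> rfl

theorem prodCongrRight_zpow (π : α → Perm β) (i : ℤ) :
    prodCongrRight π ^ i = prodCongrRight (π ^ i) :=
  (map_zpow prodCongrRightHom π i).symm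

theorem sameCycle_prodCongrRight (π : α → Perm β) {a b : α} {x y : β} :
    SameCycle (prodCongrRight π) (a, x) (b, y) ↔ a = b ∧ (π a).SameCycle x y := by
  simp only [SameCycle, prodCongrRight_zpow, prodCongrRight_apply, Prod.mk.injEq, Pi.pow_apply,
    exists_and_left]

theorem cycleCount_prodCongrRight [Fintype α] [Finite β] (π : α → Perm β) :
    cycleCount (prodCongrRight π) = ∑ a, cycleCount (π a) := by
  let f (p : α × β) : Σ a, Quotient (SameCycle.setoid (π a)) := ⟨p.1, Quotient.mk _ p.2⟩
  have hf : Function.Surjective f := fun ⟨a, q⟩ => q.inductionOn fun x => ⟨(a, x), rfl⟩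
  have hfib : ∀ p q, f p = f q ↔ SameCycle (prodCongrRight π) p q := by
    rintro ⟨a, x⟩ ⟨b, y⟩
    rw [sameCycle_prodCongrRight, Sigma.mk.inj_iff]
    constructor
    · rintro ⟨rfl, h⟩
      exact ⟨rfl, Quotient.eq.1 (eq_of_heq h)⟩
    · rintro ⟨rfl, h⟩
      exact ⟨rfl, heq_of_eq (Quotient.sound h)⟩
  rw [cycleCount_eq_natCard_of_surjective _ hf hfib, Nat.card_sigma]
  rfl

theorem sameCycle_iff_sameCycle_sq (σ : Perm α) {x y : α} :
    σ.SameCycle x y ↔ (σ ^ 2).SameCycle x y ∨ (σ ^ 2).SameCycle (σ x) y := by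
  refine ⟨?_, ?_⟩
  · rintro ⟨i, rfl⟩
    obtain ⟨j, rfl | rfl⟩ := Int.even_or_odd' i
    · exact .inl ⟨j, by rw [← zpow_natCast, ← zpow_mul, Nat.cast_ofNat, mul_comm]⟩
    · exact .inr ⟨j, by
        rw [← zpow_natCast, ← zpow_mul, Nat.cast_ofNat, mul_comm, ← mul_apply, ← zpow_add_one]⟩
  · rintro (h | h)
    · exact h.of_pow
    · exact (SameCycle.of_pow h).of_apply_left

section Wreath

variable (s t : Perm α) (π ρ : α → Perm β)

def wreathPerm : Perm (α × β) := prodCongr s 1 * prodCongrRight π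

@[simp]
theorem wreathPerm_apply (p : α × β) : wreathPerm s π p = (s p.1, π p.1 p.2) := rfl

theorem wreathPerm_mul :
    wreathPerm s π * wreathPerm t ρ = wreathPerm (s * t) (fun a => π (t a) * ρ a) := by
  ext p <;> simp

theorem wreathPerm_one_one : wreathPerm (1 : Perm α) (1 : α → Perm β) = 1 := by
  ext p <;> simp

theorem wreathPerm_one_left : wreathPerm 1 π = prodCongrRight π := by
  ext p <;> simp

variable {s t π ρ} in
theorem wreathPerm_inj [Nonempty β] : wreathPerm s π = wreathPerm t ρ ↔ s = t ∧ π = ρ := by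
  refine ⟨fun h => ?_, fun ⟨hs, hπ⟩ => hs ▸ hπ ▸ rfl⟩
  have happly (a : α) (x : β) : (s a, π a x) = (t a, ρ a x) := Equiv.ext_iff.1 h (a, x)
  exact ⟨Equiv.ext fun a => congrArg Prod.fst (happly a (Classical.arbitrary β)),
    funext fun a => Equiv.ext fun x => congrArg Prod.snd (happly a x)⟩

end Wreath

theorem cycleCount_wreathPerm_finRotate_two (π : Fin 2 → Perm β) :
    cycleCount (wreathPerm (finRotate 2) π) = cycleCount (π 1 * π 0) := by
  set ρ := wreathPerm (finRotate 2) π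
  have hsq : ρ ^ 2 = prodCongrRight ![π 1 * π 0, π 0 * π 1] := by
    ext ⟨a, x⟩ <;> fin_cases a <;> rfl
  have hzero {x y : β} : ρ.SameCycle (0, x) (0, y) ↔ (π 1 * π 0).SameCycle x y := by
    rw [sameCycle_iff_sameCycle_sq, hsq]
    simp [sameCycle_prodCongrRight, ρ]
  let r (p : Fin 2 × β) : β := if p.1 = 0 then p.2 else π 1 p.2
  have hr (p : Fin 2 × β) : ρ.SameCycle p (0, r p) := by
    obtain ⟨a, x⟩ := p
    fin_cases a
    · exact SameCycle.refl _ _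
    · exact ⟨1, rfl⟩
  refine cycleCount_eq_natCard_of_surjective ρ
    (f := fun p => Quotient.mk (SameCycle.setoid (π 1 * π 0)) (r p))
    (fun q => q.inductionOn fun x => ⟨(0, x), rfl⟩) fun p q => ?_
  refine Quotient.eq.trans (hzero.symm.trans ⟨fun h => ?_, fun h => ?_⟩)
  · exact (hr p).trans (h.trans (hr q).symm)
  · exact (hr p).symm.trans (h.trans (hr q))

end Equiv.Perm

theorem numCycles_eq_cycleCount {M : ℕ} (σ : Perm (Fin M)) : numCycles σ = σ.cycleCount := by
  rw [numCycles, Perm.cycleCount_eq_card_cycleType_add, Fintype.card_subtype]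

open Equiv.Perm

/-- `(s ⊗ id) ∘ (π 0 ⊕ ⋯ ⊕ π (m - 1))` in the notation of `nonsimpleButterfly`. -/
def butterflyCombine (m n : ℕ) (s : Perm (Fin m)) (π : Fin m → Perm (Fin (m ^ n))) :
    Perm (Fin (m ^ (n + 1))) :=
  (finProdFinEquiv.trans (finCongr (pow_succ' m n).symm)).permCongr (wreathPerm s π)

section Butterfly

variable {m n : ℕ}

theorem mem_nonsimpleButterfly_succ {σ : Perm (Fin (m ^ (n + 1)))} :
    σ ∈ nonsimpleButterfly m (n + 1) ↔
      ∃ (a : ℤ) (π : Fin m → Perm (Fin (m ^ n))), (∀ i, π i ∈ nonsimpleButterfly m n) ∧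
        σ = butterflyCombine m n (finRotate m ^ a) π := by
  have hcombine (s : Perm (Fin m)) (π : Fin m → Perm (Fin (m ^ n))) :
      (finCongr (pow_succ' m n).symm).permCongr (permKron s 1 * permBlockSum π) =
        butterflyCombine m n s π := by
    ext x; simp [permKron, permBlockSum, butterflyCombine, Perm.mul_apply]
  simp only [nonsimpleButterfly, Set.mem_ofPred_eq, hcombine]

theorem butterflyCombine_mul (s t : Perm (Fin m)) (π ρ : Fin m → Perm (Fin (m ^ n))) :
    butterflyCombine m n s π * butterflyCombine m n t ρ =
      butterflyCombine m n (s * t) (fun i => π (t i) * ρ i) := by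
  simp only [butterflyCombine, ← permCongr_mul, wreathPerm_mul]

theorem butterflyCombine_one_one : butterflyCombine m n 1 1 = 1 := by
  rw [butterflyCombine, wreathPerm_one_one, ← permCongrHom_coe, map_one]

theorem one_mem_nonsimpleButterfly : ∀ n, (1 : Perm (Fin (m ^ n))) ∈ nonsimpleButterfly m n
  | 0 => rfl
  | n + 1 => mem_nonsimpleButterfly_succ.2
    ⟨0, 1, fun _ => one_mem_nonsimpleButterfly n, by rw [zpow_zero, butterflyCombine_one_one]⟩

theorem mul_mem_nonsimpleButterfly {σ τ : Perm (Fin (m ^ n))} (hσ : σ ∈ nonsimpleButterfly m n)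
    (hτ : τ ∈ nonsimpleButterfly m n) : σ * τ ∈ nonsimpleButterfly m n := by
  induction n with
  | zero => rw [hσ, hτ, one_mul]; rfl
  | succ n ih =>
    obtain ⟨a, π, hπ, rfl⟩ := mem_nonsimpleButterfly_succ.1 hσ
    obtain ⟨b, ρ, hρ, rfl⟩ := mem_nonsimpleButterfly_succ.1 hτ
    exact mem_nonsimpleButterfly_succ.2 ⟨a + b, _, fun i => ih (hπ _) (hρ i),
      by rw [butterflyCombine_mul, zpow_add]⟩

theorem inv_mem_nonsimpleButterfly {σ : Perm (Fin (m ^ n))} (hσ : σ ∈ nonsimpleButterfly m n) :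
    σ⁻¹ ∈ nonsimpleButterfly m n := by
  induction n with
  | zero => rw [hσ, inv_one]; rfl
  | succ n ih =>
    obtain ⟨a, π, hπ, rfl⟩ := mem_nonsimpleButterfly_succ.1 hσ
    refine mem_nonsimpleButterfly_succ.2 ⟨-a, fun i => (π ((finRotate m ^ (-a)) i))⁻¹,
      fun i => ih (hπ _), (eq_inv_of_mul_eq_one_right ?_).symm⟩
    simp only [butterflyCombine_mul, ← zpow_add, add_neg_cancel, zpow_zero, mul_inv_cancel]
    exact butterflyCombine_one_one

variable (m n) in
noncomputable def nonsimpleButterflyFinset : Finset (Perm (Fin (m ^ n))) :=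
  (nonsimpleButterfly m n).toFinite.toFinset

theorem mem_nonsimpleButterflyFinset {σ : Perm (Fin (m ^ n))} :
    σ ∈ nonsimpleButterflyFinset m n ↔ σ ∈ nonsimpleButterfly m n :=
  Set.Finite.mem_toFinset _

theorem coe_nonsimpleButterflyFinset :
    (nonsimpleButterflyFinset m n : Set (Perm (Fin (m ^ n)))) = nonsimpleButterfly m n :=
  Set.Finite.coe_toFinset _

theorem sum_nonsimpleButterflyFinset_mul_right {M : Type*} [AddCommMonoid M]
    {σ : Perm (Fin (m ^ n))} (hσ : σ ∈ nonsimpleButterfly m n) (f : Perm (Fin (m ^ n)) → M) :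
    ∑ τ ∈ nonsimpleButterflyFinset m n, f (τ * σ) = ∑ τ ∈ nonsimpleButterflyFinset m n, f τ := by
  refine sum_equiv (Equiv.mulRight σ) (fun τ => ?_) fun _ _ => rfl
  simp only [mem_nonsimpleButterflyFinset, coe_mulRight]
  exact ⟨fun hτ => mul_mem_nonsimpleButterfly hτ hσ,
    fun hτσ => by simpa using mul_mem_nonsimpleButterfly hτσ (inv_mem_nonsimpleButterfly hσ)⟩

end Butterfly

theorem finRotate_two_pow_bijective :
    Function.Bijective fun a : Fin 2 => finRotate 2 ^ (a : ℕ) := by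
  decide

theorem sum_nonsimpleButterflyFinset_two_succ {M : Type*} [AddCommMonoid M] (n : ℕ)
    (f : Perm (Fin (2 ^ (n + 1))) → M) :
    ∑ σ ∈ nonsimpleButterflyFinset 2 (n + 1), f σ =
      ∑ a : Fin 2, ∑ π₀ ∈ nonsimpleButterflyFinset 2 n, ∑ π₁ ∈ nonsimpleButterflyFinset 2 n,
        f (butterflyCombine 2 n (finRotate 2 ^ (a : ℕ)) ![π₀, π₁]) := by
  simp_rw [← sum_product']
  symm
  refine sum_nbij (fun x => butterflyCombine 2 n (finRotate 2 ^ (x.1 : ℕ)) ![x.2.1, x.2.2])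
    ?_ ?_ ?_ (fun _ _ => rfl)
  · rintro ⟨a, π₀, π₁⟩ h
    simp only [mem_product, mem_univ, mem_nonsimpleButterflyFinset, true_and] at h
    exact mem_nonsimpleButterflyFinset.2 (mem_nonsimpleButterfly_succ.2
      ⟨a, ![π₀, π₁], Fin.forall_fin_two.2 h, by rw [zpow_natCast]⟩)
  · rintro ⟨a, π₀, π₁⟩ - ⟨b, ρ₀, ρ₁⟩ - h
    obtain ⟨hab, hπ⟩ := wreathPerm_inj.1 ((permCongr _).injective h)
    obtain rfl := finRotate_two_pow_bijective.1 hab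
    exact Prod.ext rfl (Prod.ext (congrFun hπ 0) (congrFun hπ 1))
  · intro σ hσ
    obtain ⟨a, π, hπ, rfl⟩ := mem_nonsimpleButterfly_succ.1 (mem_nonsimpleButterflyFinset.1 hσ)
    obtain ⟨a', ha'⟩ := finRotate_two_pow_bijective.2 (finRotate 2 ^ a)
    refine ⟨(a', π 0, π 1), by simp [mem_nonsimpleButterflyFinset, hπ], ?_⟩
    simp only [ha']
    exact congrArg _ (FinVec.etaExpand_eq π)

theorem Finset.sum_sum_add_pow {R ι κ : Type*} [CommSemiring R] (s : Finset ι) (t : Finset κ)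
    (u : ι → R) (v : κ → R) (k : ℕ) :
    ∑ x ∈ s, ∑ y ∈ t, (u x + v y) ^ k =
      ∑ j ∈ range (k + 1), k.choose j * (∑ x ∈ s, u x ^ j) * ∑ y ∈ t, v y ^ (k - j) := by
  calc ∑ x ∈ s, ∑ y ∈ t, (u x + v y) ^ k
      = ∑ x ∈ s, ∑ y ∈ t, ∑ j ∈ range (k + 1), k.choose j * u x ^ j * v y ^ (k - j) := by
        simp_rw [add_pow, mul_comm _ (k.choose _ : R), mul_assoc]
    _ = ∑ j ∈ range (k + 1), ∑ x ∈ s, ∑ y ∈ t, k.choose j * u x ^ j * v y ^ (k - j) :=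
        (sum_congr rfl fun _ _ => sum_comm).trans sum_comm
    _ = _ := by simp_rw [mul_assoc, sum_mul_sum, mul_sum]

noncomputable def cyclePowerSum (k n : ℕ) : ℝ :=
  ∑ σ ∈ nonsimpleButterflyFinset 2 n, (numCycles σ : ℝ) ^ k

theorem cyclePowerSum_zero_right (k : ℕ) : cyclePowerSum k 0 = 1 := by
  have h : nonsimpleButterflyFinset 2 0 = {1} := by
    ext σ; rw [mem_nonsimpleButterflyFinset, mem_singleton]; rfl
  simp [cyclePowerSum, h, numCycles]

theorem cyclePowerSum_succ (k n : ℕ) :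
    cyclePowerSum k (n + 1) =
      ∑ j ∈ range (k + 1), k.choose j * cyclePowerSum j n * cyclePowerSum (k - j) n +
        cyclePowerSum 0 n * cyclePowerSum k n := by
  simp only [cyclePowerSum, sum_nonsimpleButterflyFinset_two_succ, Fin.sum_univ_two,
    numCycles_eq_cycleCount, butterflyCombine, cycleCount_permCongr, Fin.val_zero, pow_zero,
    Fin.val_one, pow_one, wreathPerm_one_left, cycleCount_prodCongrRight,
    cycleCount_wreathPerm_finRotate_two, Matrix.cons_val_zero, Matrix.cons_val_one, Nat.cast_add,
    sum_sum_add_pow]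
  congr 1
  rw [sum_mul]
  refine sum_congr rfl fun π₀ hπ₀ => ?_
  rw [one_mul, sum_nonsimpleButterflyFinset_mul_right (mem_nonsimpleButterflyFinset.1 hπ₀)
    fun σ => (σ.cycleCount : ℝ) ^ k]

theorem cyclePowerSum_zero_succ (n : ℕ) : cyclePowerSum 0 (n + 1) = 2 * cyclePowerSum 0 n ^ 2 := by
  simp only [cyclePowerSum_succ, zero_add, range_one, sum_singleton, Nat.choose_self, Nat.cast_one,
    one_mul, Nat.sub_self]
  ring

theorem cyclePowerSum_zero_left (n : ℕ) : cyclePowerSum 0 n = 2 ^ (2 ^ n - 1) := by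
  induction n with
  | zero => simpa using cyclePowerSum_zero_right 0
  | succ n ih =>
    have hexp : 2 ^ (n + 1) - 1 = (2 ^ n - 1) + (2 ^ n - 1) + 1 := by
      have := Nat.one_le_two_pow (n := n)
      rw [pow_succ]; omega
    rw [cyclePowerSum_zero_succ, ih, hexp, pow_succ, pow_add]
    ring

theorem le_pow_mul_add_div_of_le_mul_add {y : ℕ → ℝ} {c δ : ℝ} (hc₀ : 0 ≤ c) (hc₁ : c < 1)
    (hδ : 0 ≤ δ) (h : ∀ m, y (m + 1) ≤ c * y m + δ) (m : ℕ) :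
    y m ≤ c ^ m * y 0 + δ / (1 - c) := by
  have hc : 0 < 1 - c := sub_pos.2 hc₁
  induction m with
  | zero => rw [pow_zero, one_mul]; exact le_add_of_nonneg_right (by positivity)
  | succ m ih =>
    calc y (m + 1) ≤ c * (c ^ m * y 0 + δ / (1 - c)) + δ := (h m).trans (by gcongr)
      _ = c ^ (m + 1) * y 0 + δ / (1 - c) := by field_simp; ring

theorem tendsto_of_affine_recurrence {c L : ℝ} (hc₀ : 0 ≤ c) (hc₁ : c < 1) {x β : ℕ → ℝ}
    (hrec : ∀ n, x (n + 1) = c * x n + β n) (hβ : Tendsto β atTop (𝓝 ((1 - c) * L))) :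
    Tendsto x atTop (𝓝 L) := by
  have hc : 0 < 1 - c := sub_pos.2 hc₁
  refine Metric.tendsto_atTop.2 fun ε hε => ?_
  obtain ⟨N, hN⟩ := Metric.tendsto_atTop.1 hβ ((1 - c) * (ε / 2)) (by positivity)
  have hstep (m : ℕ) :
      |x (N + m + 1) - L| ≤ c * |x (N + m) - L| + (1 - c) * (ε / 2) := by
    have hβm := hN (N + m) (Nat.le_add_right N m)
    rw [Real.dist_eq] at hβm
    calc |x (N + m + 1) - L| = |c * (x (N + m) - L) + (β (N + m) - (1 - c) * L)| := by
          rw [hrec]; ring_nf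
      _ ≤ c * |x (N + m) - L| + |β (N + m) - (1 - c) * L| :=
          (abs_add_le _ _).trans_eq (by rw [abs_mul, abs_of_nonneg hc₀])
      _ ≤ c * |x (N + m) - L| + (1 - c) * (ε / 2) := by linarith
  have hbound (m : ℕ) : |x (N + m) - L| ≤ c ^ m * |x N - L| + ε / 2 := by
    simpa only [add_zero, mul_div_cancel_left₀ _ hc.ne'] using
      le_pow_mul_add_div_of_le_mul_add (y := fun m => |x (N + m) - L|) hc₀ hc₁ (by positivity)
        hstep m
  have hpow : Tendsto (fun m => c ^ m * |x N - L|) atTop (𝓝 0) := by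
    simpa using (tendsto_pow_atTop_nhds_zero_of_lt_one hc₀ hc₁).mul_const |x N - L|
  obtain ⟨M, hM⟩ := eventually_atTop.1 (hpow.eventually (gt_mem_nhds (half_pos hε)))
  refine ⟨N + M, fun n hn => ?_⟩
  obtain ⟨m, rfl⟩ := Nat.exists_eq_add_of_le (le_of_add_le_left hn)
  rw [Real.dist_eq]
  linarith [hbound m, hM m (by omega)]

theorem cycleMoment_add_two (k : ℕ) :
    cycleMoment (k + 2) =
      (∑ j ∈ Ico 1 (k + 2), ((k + 2).choose j : ℝ) * cycleMoment j * cycleMoment (k + 2 - j)) /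
        (2 * (3 / 2) ^ (k + 2) - 3) := by
  rw [cycleMoment, sum_attach (Ico 1 (k + 2))
    fun j => ((k + 2).choose j : ℝ) * cycleMoment j * cycleMoment (k + 2 - j),
    div_div, mul_sub, div_mul_eq_mul_div, one_mul]
  norm_num

theorem tendsto_cycleMoment_of_recurrence (A : ℕ → ℕ → ℝ) (hA₀ : ∀ n, A 0 n = 1)
    (hA₁ : A 1 0 = 1) (hrec : ∀ k n, A k (n + 1) = (2 / 3) ^ k / 2 *
      (∑ j ∈ range (k + 1), k.choose j * A j n * A (k - j) n + A k n)) (k : ℕ) :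
    Tendsto (A k) atTop (𝓝 (cycleMoment k)) := by
  induction k using Nat.strong_induction_on with | _ k ih => ?_
  match k with
  | 0 => simp [cycleMoment, funext hA₀]
  | 1 =>
    have hA (n : ℕ) : A 1 n = 1 := by
      induction n with
      | zero => exact hA₁
      | succ n ihn => norm_num [hrec, sum_range_succ, hA₀, ihn]
    simp [cycleMoment, funext hA]
  | k + 2 =>
    set K := k + 2
    set q : ℝ := (3 / 2) ^ K
    have hq : 9 / 4 ≤ q := by
      calc (9 / 4 : ℝ) = (3 / 2) ^ 2 := by norm_num
        _ ≤ q := pow_le_pow_right₀ (by norm_num) (by omega)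
    set inner : ℕ → ℝ := fun n => ∑ j ∈ Ico 1 K, (K.choose j : ℝ) * A j n * A (K - j) n
    have hsplit (n : ℕ) : A K (n + 1) = 3 / 2 / q * A K n + 1 / (2 * q) * inner n := by
      rw [hrec, sum_range_succ, range_eq_Ico, sum_eq_sum_Ico_succ_bot (by omega : 0 < K)]
      simp only [Nat.choose_zero_right, Nat.choose_self, Nat.sub_zero, Nat.sub_self, hA₀, q,
        div_pow, one_div]
      field_simp
      ring
    set S := ∑ j ∈ Ico 1 K, (K.choose j : ℝ) * cycleMoment j * cycleMoment (K - j)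
    have hinner : Tendsto inner atTop (𝓝 S) :=
      tendsto_finsetSum _ fun j hj => by
        rw [mem_Ico] at hj
        exact (tendsto_const_nhds.mul (ih j (by omega))).mul (ih (K - j) (by omega))
    have hm : cycleMoment K = S / (2 * q - 3) := cycleMoment_add_two k
    have hq' : 2 * q - 3 ≠ 0 := by linarith
    refine tendsto_of_affine_recurrence (by positivity) ?_ hsplit ?_
    · rw [div_lt_one (by positivity)]; linarith
    · convert hinner.const_mul (1 / (2 * q)) using 2
      rw [hm]
      field_simp

noncomputable def butterflyMoment (k n : ℕ) : ℝ :=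
  (2 / 3) ^ (n * k) * (cyclePowerSum k n / cyclePowerSum 0 n)

theorem butterflyMoment_zero_left (n : ℕ) : butterflyMoment 0 n = 1 := by
  rw [butterflyMoment, cyclePowerSum_zero_left, mul_zero, pow_zero, one_mul,
    div_self (by positivity)]

theorem butterflyMoment_succ (k n : ℕ) :
    butterflyMoment k (n + 1) = (2 / 3) ^ k / 2 *
      (∑ j ∈ range (k + 1), k.choose j * butterflyMoment j n * butterflyMoment (k - j) n +
        butterflyMoment k n) := by
  have hN : cyclePowerSum 0 n ≠ 0 := by rw [cyclePowerSum_zero_left]; positivity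
  have hterm (j : ℕ) (hj : j ∈ range (k + 1)) :
      k.choose j * butterflyMoment j n * butterflyMoment (k - j) n =
        (2 / 3) ^ (n * k) / cyclePowerSum 0 n ^ 2 *
          (k.choose j * cyclePowerSum j n * cyclePowerSum (k - j) n) := by
    have hpow : ((2 : ℝ) / 3) ^ (n * j) * (2 / 3) ^ (n * (k - j)) = (2 / 3) ^ (n * k) := by
      rw [← pow_add, ← mul_add, Nat.add_sub_cancel' (mem_range_succ_iff.1 hj)]
    rw [butterflyMoment, butterflyMoment, ← hpow]
    field_simp
  rw [sum_congr rfl hterm, ← mul_sum, butterflyMoment, butterflyMoment, cyclePowerSum_succ k n,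
    cyclePowerSum_zero_succ, add_mul, one_mul, pow_add]
  field_simp

theorem nonsimpleButterfly_cycle_moment_limit_general (k : ℕ) :
    Filter.Tendsto
      (fun n : ℕ => ((2 : ℝ) / 3) ^ (n * k) *
        ((1 / (2 : ℝ) ^ (2 ^ n - 1)) *
          ∑ᶠ σ ∈ nonsimpleButterfly 2 n, (numCycles σ : ℝ) ^ k))
      Filter.atTop (nhds (cycleMoment k)) := by
  refine (tendsto_cycleMoment_of_recurrence butterflyMoment butterflyMoment_zero_left
    (by simp [butterflyMoment, cyclePowerSum_zero_right]) butterflyMoment_succ k).congr fun n => ?_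
  rw [butterflyMoment, cyclePowerSum_zero_left, ← coe_nonsimpleButterflyFinset,
    finsum_mem_coe_finset, one_div_mul_eq_div]
  rfl

/-- For every `k ≥ 1`, the normalized `k`-th moment of the number of cycles of a
uniform nonsimple binary butterfly permutation converges to `m_k`:
`(2/3)^{nk} · (1/2^{2ⁿ−1}) Σ_{σ ∈ B_{2^n}} C(σ)^k → m_k` as `n → ∞`. -/
theorem nonsimpleButterfly_cycle_moment_limit (k : ℕ) (hk : 1 ≤ k) :
    Filter.Tendsto
      (fun n : ℕ => ((2 : ℝ) / 3) ^ (n * k) *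
        ((1 / (2 : ℝ) ^ (2 ^ n - 1)) *
          ∑ᶠ σ ∈ nonsimpleButterfly 2 n, (numCycles σ : ℝ) ^ k))
      Filter.atTop (nhds (cycleMoment k)) :=
  nonsimpleButterfly_cycle_moment_limit_general k
end

section
/- Fix m ≥ 2 and n ≥ 0, and for σ a permutation of {1,…,m^n} let F(σ) denote the number of fixed points of σ. For σ drawn uniformly from the nonsimple m-nary butterfly permutations B_n^{(m)}: E F(σ) = 1 and E[F(σ)²] = n·(m−1) + 1. -/
/-!
`B_{n+1}` is parametrized injectively by `(a, σ₁, …, σ_m)` with `a ∈ ℤ/m`, `σᵢ ∈ B_n`, and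
`(τ^a ⊗ id) ∘ (σ₁ ⊕ ⋯ ⊕ σ_m)` has fixed points only when `a = 0`, in which case
`F = F(σ₁) + ⋯ + F(σ_m)`. So `F` on `B_{n+1}` is, with probability `1/m`, a sum of `m`
independent copies of `F` on `B_n`, and `0` otherwise. By induction `E F = 1` throughout,
and `E F²` grows by `m - 1` at each level.
-/

open Equiv Finset Fin.NatCast

section PiFinset

variable {ι β R : Type*} [Fintype ι] [DecidableEq ι]

theorem sum_piFinset_const_prod_apply [CommSemiring R] (s : Finset β) (g : β → R)
    (J : Finset ι) :
    ∑ π ∈ Fintype.piFinset (fun _ : ι => s), ∏ k ∈ J, g (π k) =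
      (∑ x ∈ s, g x) ^ #J * (#s : R) ^ #Jᶜ := by
  have hJ (π : ι → β) : ∏ k ∈ J, g (π k) = ∏ k, if k ∈ J then g (π k) else 1 := by
    rw [prod_ite_mem, univ_inter]
  have hk (k : ι) : ∑ x ∈ s, (if k ∈ J then g x else 1) =
      if k ∈ J then ∑ x ∈ s, g x else (#s : R) := by
    split_ifs <;> simp
  simp_rw [hJ]
  rw [← prod_univ_sum (fun _ => s) (fun k x => if k ∈ J then g x else 1)]
  simp [hk, prod_ite, filter_not, compl_eq_univ_sdiff]

theorem sum_piFinset_const_prod_apply_of_sum_eq [CommSemiring R] (s : Finset β) {g : β → R}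
    {c : R} (hg : ∑ x ∈ s, g x = c * #s) (J : Finset ι) :
    ∑ π ∈ Fintype.piFinset (fun _ : ι => s), ∏ k ∈ J, g (π k) =
      c ^ #J * (#s : R) ^ Fintype.card ι := by
  rw [sum_piFinset_const_prod_apply, hg, mul_pow, mul_assoc, ← pow_add, card_add_card_compl]

theorem sum_piFinset_const_sum_apply [CommSemiring R] (s : Finset β) {g : β → R}
    {c : R} (hg : ∑ x ∈ s, g x = c * #s) :
    ∑ π ∈ Fintype.piFinset (fun _ : ι => s), ∑ i, g (π i) =
      Fintype.card ι * c * (#s : R) ^ Fintype.card ι := by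
  have hsingle (i : ι) : ∑ π ∈ Fintype.piFinset (fun _ : ι => s), g (π i) =
      c * (#s : R) ^ Fintype.card ι := by
    simpa using sum_piFinset_const_prod_apply_of_sum_eq s hg {i}
  rw [sum_comm]
  simp [hsingle, mul_assoc]

theorem sum_piFinset_const_sum_apply_sq [CommRing R] (s : Finset β) {g : β → R}
    {c d : R} (hg : ∑ x ∈ s, g x = c * #s) (hg2 : ∑ x ∈ s, g x ^ 2 = d * #s) :
    ∑ π ∈ Fintype.piFinset (fun _ : ι => s), (∑ i, g (π i)) ^ 2 =
      Fintype.card ι * (d + (Fintype.card ι - 1) * c ^ 2) * (#s : R) ^ Fintype.card ι := by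
  have hpair (i j : ι) : ∑ π ∈ Fintype.piFinset (fun _ : ι => s), g (π i) * g (π j) =
      (if j = i then d else c ^ 2) * (#s : R) ^ Fintype.card ι := by
    split_ifs with hji
    · subst hji
      simpa [sq] using sum_piFinset_const_prod_apply_of_sum_eq s hg2 {j}
    · simpa [prod_pair (Ne.symm hji), card_pair (Ne.symm hji), sq] using
        sum_piFinset_const_prod_apply_of_sum_eq s hg {i, j}
  simp_rw [sq, sum_mul_sum]
  rw [sum_comm]
  simp_rw [sum_comm (s := Fintype.piFinset _), hpair, ← sum_mul]
  have hrow (i : ι) :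
      ∑ j, (if j = i then d else c ^ 2) = d + (Fintype.card ι - 1) * c ^ 2 := by
    rw [← add_sum_erase _ _ (mem_univ i), if_pos rfl,
      sum_congr rfl fun j hj => if_neg (ne_of_mem_erase hj), sum_const,
      card_erase_of_mem (mem_univ i), card_univ, nsmul_eq_mul,
      Nat.cast_pred (Fintype.card_pos_iff.mpr ⟨i⟩)]
  rw [sum_congr rfl fun i _ => hrow i, sum_const, card_univ, nsmul_eq_mul, sq, mul_assoc]

end PiFinset

theorem finRotate_pow_apply {m : ℕ} [NeZero m] (k : ℕ) (i : Fin m) :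
    (finRotate m ^ k) i = i + k := by
  induction k with
  | zero => simp
  | succ k ih => rw [pow_succ', Perm.mul_apply, ih, finRotate_apply, Nat.cast_succ, add_assoc]

theorem finRotate_pow_card (m : ℕ) [NeZero m] : finRotate m ^ m = 1 := by
  ext i
  simp [finRotate_pow_apply]

theorem finRotate_pow_val_apply_eq_self_iff {m : ℕ} [NeZero m] (a i : Fin m) :
    (finRotate m ^ (a : ℕ)) i = i ↔ a = 0 := by
  rw [finRotate_pow_apply, Fin.cast_val_eq_self, add_eq_left]

theorem exists_finRotate_zpow_eq_pow_val (m : ℕ) [NeZero m] (z : ℤ) :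
    ∃ a : Fin m, finRotate m ^ z = finRotate m ^ (a : ℕ) := by
  have hm : (0 : ℤ) < m := by exact_mod_cast Nat.pos_of_neZero m
  have hr := Int.emod_nonneg z hm.ne'
  refine ⟨⟨(z % m).toNat, by have := Int.emod_lt_of_pos z hm; omega⟩, ?_⟩
  rw [zpow_eq_zpow_emod' z (finRotate_pow_card m), ← zpow_natCast, Int.toNat_of_nonneg hr]

section Butterfly

variable (m : ℕ)

def butterflyEquiv (n : ℕ) : Fin m × Fin (m ^ n) ≃ Fin (m ^ (n + 1)) :=
  finProdFinEquiv.trans (finCongr (pow_succ' m n).symm)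

def butterflyStep (n : ℕ) (a : ℤ) (π : Fin m → Perm (Fin (m ^ n))) :
    Perm (Fin (m ^ (n + 1))) :=
  (finCongr (pow_succ' m n).symm).permCongr (permKron (finRotate m ^ a) 1 * permBlockSum π)

theorem butterflyStep_apply (n : ℕ) (a : ℤ) (π : Fin m → Perm (Fin (m ^ n))) (i : Fin m)
    (r : Fin (m ^ n)) :
    butterflyStep m n a π (butterflyEquiv m n (i, r)) =
      butterflyEquiv m n ((finRotate m ^ a) i, π i r) := by
  simp [butterflyStep, butterflyEquiv, permKron, permBlockSum, Perm.mul_apply,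
    Equiv.permCongr_apply]

theorem nonsimpleButterfly_succ (n : ℕ) :
    nonsimpleButterfly m (n + 1) = {σ | ∃ (a : ℤ) (π : Fin m → Perm (Fin (m ^ n))),
      (∀ i, π i ∈ nonsimpleButterfly m n) ∧ σ = butterflyStep m n a π} :=
  rfl

-- Exponents are reduced mod `m` (as `τ^m = 1`), which makes the parametrization injective.

def butterflyFinset : (n : ℕ) → Finset (Perm (Fin (m ^ n)))
  | 0 => {1}
  | n + 1 => (univ ×ˢ Fintype.piFinset fun _ => butterflyFinset n).image
      fun p : Fin m × (Fin m → Perm (Fin (m ^ n))) => butterflyStep m n (p.1 : ℕ) p.2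

variable [NeZero m]

theorem coe_butterflyFinset (n : ℕ) :
    (butterflyFinset m n : Set (Perm (Fin (m ^ n)))) = nonsimpleButterfly m n := by
  induction n with
  | zero => exact coe_singleton _
  | succ n ih =>
    ext σ
    simp only [butterflyFinset, nonsimpleButterfly_succ, ← ih, coe_image, Set.mem_image,
      Set.mem_ofPred_eq, mem_coe, mem_product, mem_univ, true_and, Fintype.mem_piFinset,
      Prod.exists]
    constructor
    · rintro ⟨a, π, hπ, rfl⟩
      exact ⟨a, π, hπ, rfl⟩
    · rintro ⟨z, π, hπ, rfl⟩
      obtain ⟨a, ha⟩ := exists_finRotate_zpow_eq_pow_val m z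
      exact ⟨a, π, hπ, by rw [butterflyStep, butterflyStep, ha, zpow_natCast]⟩

theorem butterflyStep_injective (n : ℕ) :
    Function.Injective fun p : Fin m × (Fin m → Perm (Fin (m ^ n))) =>
      butterflyStep m n (p.1 : ℕ) p.2 := by
  rintro ⟨a, π⟩ ⟨b, ρ⟩ h
  have happ (i : Fin m) (r : Fin (m ^ n)) :=
    congrArg (butterflyEquiv m n).symm (DFunLike.congr_fun h (butterflyEquiv m n (i, r)))
  simp only [butterflyStep_apply, zpow_natCast, Equiv.symm_apply_apply, Prod.mk.injEq] at happ
  refine Prod.ext ?_ (funext fun i => Equiv.ext fun r => (happ i r).2)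
  simpa [finRotate_pow_apply] using (happ 0 0).1

theorem card_butterflyFinset_succ (n : ℕ) :
    #(butterflyFinset m (n + 1)) = m * #(butterflyFinset m n) ^ m := by
  rw [butterflyFinset, card_image_of_injective _ (butterflyStep_injective m n)]
  simp

theorem card_butterflyFinset_pos (n : ℕ) : 0 < #(butterflyFinset m n) := by
  induction n with
  | zero => exact card_pos.mpr (singleton_nonempty _)
  | succ n ih =>
    rw [card_butterflyFinset_succ]
    exact mul_pos (Nat.pos_of_neZero m) (pow_pos ih m)

theorem numFixed_butterflyStep (n : ℕ) (a : Fin m) (π : Fin m → Perm (Fin (m ^ n))) :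
    numFixed (butterflyStep m n (a : ℕ) π) = if a = 0 then ∑ i, numFixed (π i) else 0 := by
  rw [numFixed, card_filter, ← (butterflyEquiv m n).sum_comp, Fintype.sum_prod_type]
  simp only [butterflyStep_apply, EmbeddingLike.apply_eq_iff_eq, Prod.mk.injEq, zpow_natCast,
    finRotate_pow_val_apply_eq_self_iff]
  split_ifs with ha
  · simp only [ha, true_and, numFixed, card_filter]
  · simp [ha]

theorem sum_comp_numFixed_butterflyFinset_succ {R : Type*} [AddCommMonoid R] (f : ℕ → R)
    (hf : f 0 = 0) (n : ℕ) :
    ∑ σ ∈ butterflyFinset m (n + 1), f (numFixed σ) =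
      ∑ π ∈ Fintype.piFinset (fun _ : Fin m => butterflyFinset m n),
        f (∑ i, numFixed (π i)) := by
  rw [butterflyFinset, sum_image fun _ _ _ _ h => butterflyStep_injective m n h, sum_product,
    sum_eq_single 0 (fun a _ ha => by simp [numFixed_butterflyStep, ha, hf]) (by simp)]
  exact sum_congr rfl fun π _ => by rw [numFixed_butterflyStep, if_pos rfl]

theorem numFixed_moments_butterflyFinset (n : ℕ) :
    ∑ σ ∈ butterflyFinset m n, (numFixed σ : ℝ) = #(butterflyFinset m n) ∧
    ∑ σ ∈ butterflyFinset m n, (numFixed σ : ℝ) ^ 2 =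
      (n * ((m : ℝ) - 1) + 1) * #(butterflyFinset m n) := by
  induction n with
  | zero =>
    have hid : numFixed (1 : Perm (Fin (m ^ 0))) = 1 := by
      rw [numFixed, filter_true_of_mem fun x _ => Perm.one_apply x, card_univ, Fintype.card_fin,
        pow_zero]
    simp only [butterflyFinset, sum_singleton, card_singleton, hid]
    norm_num
  | succ n ih =>
    obtain ⟨h1, h2⟩ := ih
    replace h1 := h1.trans (one_mul _).symm
    rw [sum_comp_numFixed_butterflyFinset_succ m Nat.cast Nat.cast_zero,
      sum_comp_numFixed_butterflyFinset_succ m (fun k => (k : ℝ) ^ 2) (by simp)]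
    push_cast
    rw [sum_piFinset_const_sum_apply _ h1, sum_piFinset_const_sum_apply_sq _ h1 h2,
      card_butterflyFinset_succ, Fintype.card_fin]
    constructor <;> push_cast <;> ring

end Butterfly

/-- For `σ` uniform on the nonsimple `m`-nary butterfly permutations `B_n^{(m)}`, the
number of fixed points `F(σ)` satisfies `E F(σ) = 1` and `E[F(σ)²] = n(m−1) + 1`. -/
theorem nonsimpleButterfly_fixed_point_moments (m n : ℕ) (hm : 2 ≤ m) :
    (1 / ((nonsimpleButterfly m n).ncard : ℝ)) *
        ∑ᶠ σ ∈ nonsimpleButterfly m n, (numFixed σ : ℝ) = 1 ∧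
    (1 / ((nonsimpleButterfly m n).ncard : ℝ)) *
        ∑ᶠ σ ∈ nonsimpleButterfly m n, (numFixed σ : ℝ) ^ 2 =
      (n : ℝ) * ((m : ℝ) - 1) + 1 := by
  have : NeZero m := ⟨by omega⟩
  have hcard : (#(butterflyFinset m n) : ℝ) ≠ 0 := by
    exact_mod_cast (card_butterflyFinset_pos m n).ne'
  obtain ⟨h1, h2⟩ := numFixed_moments_butterflyFinset m n
  rw [← coe_butterflyFinset m n, Set.ncard_coe_finset, finsum_mem_coe_finset,
    finsum_mem_coe_finset, h1, h2]
  constructor <;> field_simp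
end
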